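/- Let P be a real symmetric positive semidefinite solution of the ARE and Ã = Ā − B̄B̄ᵀP. Then for h = [h₁; h₂] ∈ ℂ^{n+m} (with h₁ ∈ ℂⁿ, h₂ ∈ ℂ^m), Ãh = 0 holds if and only if (−L + aIₙ)h₁ + Bh₂ = 0 and Q(α)h₁ = 0. -/

import Mathlib

/-!
Write `w = B̄ᵀ P x` and `Ã = Ā − B̄ B̄ᵀ P`. Evaluating the Riccati equation on `x` gives
`2 Re ⟨Āx, Px⟩ − ‖w‖² + ⟨x, Q̄x⟩ = 0`. If `Ãx = 0` then `Āx = B̄w`, so `⟨Āx, Px⟩ = ‖w‖²` and the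
identity becomes `‖w‖² + ⟨x, Q̄x⟩ = 0`; as `Q̄ ⪰ 0` both terms vanish, whence `Q̄x = 0` and
`Āx = B̄w = 0`. Conversely, if `Āx = 0` and `Q̄x = 0` the identity reads `‖w‖² = 0`, so
`Ãx = Āx − B̄w = 0`. Positive semidefiniteness of `Q(α)` comes from
`Q(α) = diag(α) L diag(α)`, and the block structure of `Ā` and `Q̄` turns `Āx = 0 ∧ Q̄x = 0` into
the two stated equations. The argument is run over `ℂ` after complexifying the real data.
-/

open Matrix Filter Topology

/-- `Q(α) = D + A¹(α) − A²(α)` where `A¹(α)` keeps adjacency entries with `α i = -α j`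
and `A²(α)` keeps adjacency entries with `α i = α j`. -/
noncomputable def Qmat {n : ℕ} (G : SimpleGraph (Fin n)) [DecidableRel G.Adj] (α : Fin n → ℝ) :
    Matrix (Fin n) (Fin n) ℝ :=
  G.degMatrix ℝ
    + Matrix.of (fun i j => if α i = -α j then G.adjMatrix ℝ i j else 0)
    - Matrix.of (fun i j => if α i = α j then G.adjMatrix ℝ i j else 0)

/-- A pair `(M, N)` with `M : k×k`, `N : k×l` is controllable if the controllability
matrix `[N, MN, …, M^{k−1}N]` has full rank `k`. -/
def Controllable {K L : Type*} [Fintype K] [Fintype L] [DecidableEq K]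
    (M : Matrix K K ℝ) (N : Matrix K L ℝ) : Prop :=
  (Matrix.of fun (i : K) (p : Fin (Fintype.card K) × L) => (M ^ (p.1 : ℕ) * N) i p.2).rank
    = Fintype.card K

/-- `(M, C)` is observable iff `(Mᵀ, Cᵀ)` is controllable. -/
def Observable {K L : Type*} [Fintype K] [Fintype L] [DecidableEq K] [DecidableEq L]
    (M : Matrix K K ℝ) (C : Matrix L K ℝ) : Prop :=
  Controllable Mᵀ Cᵀ

open scoped ComplexOrder

theorem Complex.semiconj_ofReal_star : Function.Semiconj Complex.ofReal star star :=
  fun r => (Complex.conj_ofReal r).symm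

namespace Matrix

variable {R S k l k' l' : Type*} [Fintype k] [Fintype l]

def riccati [CommRing R] [StarRing R] (A : Matrix k k R) (B : Matrix k l R) (Q P : Matrix k k R) :
    Matrix k k R :=
  Aᴴ * P + P * A - P * B * Bᴴ * P + Q

def closedLoop [CommRing R] [StarRing R] (A : Matrix k k R) (B : Matrix k l R)
    (P : Matrix k k R) : Matrix k k R :=
  A - B * Bᴴ * P

section Map

variable [CommRing R] [StarRing R] [CommRing S] [StarRing S]
  (f : R →+* S) (hf : Function.Semiconj f star star)
include hf

theorem riccati_map (A : Matrix k k R) (B : Matrix k l R) (Q P : Matrix k k R) :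
    (riccati A B Q P).map f = riccati (A.map f) (B.map f) (Q.map f) (P.map f) := by
  simp only [riccati, Matrix.map_add f (map_add f), Matrix.map_sub f (map_sub f), Matrix.map_mul,
    conjTranspose_map f hf]

theorem closedLoop_map (A : Matrix k k R) (B : Matrix k l R) (P : Matrix k k R) :
    (closedLoop A B P).map f = closedLoop (A.map f) (B.map f) (P.map f) := by
  simp only [closedLoop, Matrix.map_sub f (map_sub f), Matrix.map_mul, conjTranspose_map f hf]

end Map

theorem dotProduct_riccati_mulVec [CommRing R] [StarRing R] (A : Matrix k k R)
    (B : Matrix k l R) (Q : Matrix k k R) {P : Matrix k k R} (hP : P.IsHermitian) (x : k → R) :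
    star x ⬝ᵥ (riccati A B Q P *ᵥ x)
      = star (A *ᵥ x) ⬝ᵥ (P *ᵥ x) + star (P *ᵥ x) ⬝ᵥ (A *ᵥ x)
        - star (Bᴴ *ᵥ P *ᵥ x) ⬝ᵥ (Bᴴ *ᵥ P *ᵥ x) + star x ⬝ᵥ (Q *ᵥ x) := by
  simp only [riccati, add_mulVec, sub_mulVec, ← mulVec_mulVec, dotProduct_add, dotProduct_sub,
    star_mulVec, conjTranspose_conjTranspose, hP.eq, dotProduct_mulVec, vecMul_vecMul]

theorem closedLoop_mulVec_eq_zero_iff {𝕜 : Type*} [RCLike 𝕜] [DecidableEq k]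
    {A P Q : Matrix k k 𝕜} {B : Matrix k l 𝕜} (hP : P.IsHermitian) (hQ : Q.PosSemidef)
    (hare : riccati A B Q P = 0) (x : k → 𝕜) :
    closedLoop A B P *ᵥ x = 0 ↔ A *ᵥ x = 0 ∧ Q *ᵥ x = 0 := by
  set w := Bᴴ *ᵥ P *ᵥ x with hw
  have hquad := dotProduct_riccati_mulVec A B Q hP x
  rw [hare, zero_mulVec, dotProduct_zero, ← hw] at hquad
  have hclosed : closedLoop A B P *ᵥ x = A *ᵥ x - B *ᵥ w := by
    rw [closedLoop, sub_mulVec, ← mulVec_mulVec, ← mulVec_mulVec]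
  rw [hclosed, sub_eq_zero]
  constructor
  · intro hAx
    have hAP : star (A *ᵥ x) ⬝ᵥ (P *ᵥ x) = star w ⬝ᵥ w := by
      rw [hAx, star_mulVec, ← dotProduct_mulVec]
    have hPA : star (P *ᵥ x) ⬝ᵥ (A *ᵥ x) = star w ⬝ᵥ w := by
      rw [hAx, dotProduct_mulVec, ← conjTranspose_conjTranspose B, ← star_mulVec]
    have hsum : star w ⬝ᵥ w + star x ⬝ᵥ (Q *ᵥ x) = 0 := by
      rw [hAP, hPA] at hquad
      linear_combination -hquad
    obtain ⟨hw0, hQx⟩ := (add_eq_zero_iff_of_nonneg (dotProduct_star_self_nonneg w)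
      (hQ.dotProduct_mulVec_nonneg x)).mp hsum
    rw [dotProduct_star_self_eq_zero] at hw0
    rw [hw0, mulVec_zero] at hAx
    exact ⟨hAx, (hQ.dotProduct_mulVec_zero_iff x).mp hQx⟩
  · rintro ⟨hAx, hQx⟩
    rw [hAx, hQx] at hquad
    have hw0 : w = 0 := by
      rw [← dotProduct_star_self_eq_zero]
      simpa using hquad
    rw [hAx, hw0, mulVec_zero]

theorem PosSemidef.map_ofReal [DecidableEq k] {M : Matrix k k ℝ} (hM : M.PosSemidef) :
    (M.map Complex.ofReal).PosSemidef := by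
  open scoped MatrixOrder in
  obtain ⟨C, rfl⟩ := CStarAlgebra.nonneg_iff_eq_star_mul_self.mp hM.nonneg
  change ((star C * C).map Complex.ofRealHom).PosSemidef
  rw [Matrix.map_mul, star_eq_conjTranspose,
    conjTranspose_map (⇑Complex.ofRealHom) Complex.semiconj_ofReal_star]
  exact posSemidef_conjTranspose_mul_self _

theorem PosSemidef.fromBlocks_zero [DecidableEq k] [CommRing R] [PartialOrder R] [StarRing R]
    {M : Matrix k k R} (hM : M.PosSemidef) :
    (fromBlocks M 0 0 0 : Matrix (k ⊕ l) (k ⊕ l) R).PosSemidef := by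
  simpa [conjTranspose_fromCols_eq_fromRows_conjTranspose, ← fromCols_fromRows_eq_fromBlocks]
    using hM.conjTranspose_mul_mul_same (fromCols (1 : Matrix k k R) (0 : Matrix k l R))

omit [Fintype k] [Fintype l] in
theorem fromBlocks_zero_zero_mulVec_eq_zero_iff [Fintype k'] [Fintype l'] [Ring R]
    (A : Matrix k k' R) (B : Matrix k l' R) (x : k' → R) (y : l' → R) :
    fromBlocks A B (0 : Matrix l k' R) (0 : Matrix l l' R) *ᵥ Sum.elim x y = 0 ↔
      A *ᵥ x + B *ᵥ y = 0 := by
  rw [fromBlocks_mulVec, ← Sum.elim_zero_zero, Sum.elim_eq_iff]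
  simp

end Matrix

theorem Qmat_eq_diagonal_mul_lapMatrix_mul_diagonal {n : ℕ} (G : SimpleGraph (Fin n))
    [DecidableRel G.Adj] {α : Fin n → ℝ} (hα : ∀ i, α i = 1 ∨ α i = -1) :
    Qmat G α = diagonal α * G.lapMatrix ℝ * diagonal α := by
  ext i j
  rw [mul_diagonal, diagonal_mul]
  simp only [Qmat, SimpleGraph.lapMatrix, Matrix.add_apply, Matrix.sub_apply, of_apply]
  by_cases hij : i = j
  · subst hij
    rcases hα i with h | h <;> norm_num [h, SimpleGraph.degMatrix]
  · rcases hα i with hi | hi <;> rcases hα j with hj | hj <;>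
      norm_num [hi, hj, SimpleGraph.degMatrix, hij] <;> split_ifs <;> norm_num

theorem posSemidef_Qmat {n : ℕ} (G : SimpleGraph (Fin n)) [DecidableRel G.Adj]
    {α : Fin n → ℝ} (hα : ∀ i, α i = 1 ∨ α i = -1) : (Qmat G α).PosSemidef := by
  have h := (SimpleGraph.posSemidef_lapMatrix ℝ G).conjTranspose_mul_mul_same (diagonal α)
  rwa [diagonal_conjTranspose, star_trivial,
    ← Qmat_eq_diagonal_mul_lapMatrix_mul_diagonal G hα] at h

theorem closedLoop_kernel_characterization_general {n m : ℕ}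
    (G : SimpleGraph (Fin n)) [DecidableRel G.Adj]
    (α : Fin n → ℝ) (hα : ∀ i, α i = 1 ∨ α i = -1) (a : ℝ)
    (B : Matrix (Fin n) (Fin m) ℝ)
    (Abar : Matrix (Fin n ⊕ Fin m) (Fin n ⊕ Fin m) ℝ)
    (hAbar : Abar = Matrix.fromBlocks
      (-(G.lapMatrix ℝ) + a • (1 : Matrix (Fin n) (Fin n) ℝ)) B 0 0)
    (Bbar : Matrix (Fin n ⊕ Fin m) (Fin m) ℝ)
    (Qbar : Matrix (Fin n ⊕ Fin m) (Fin n ⊕ Fin m) ℝ)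
    (hQbar : Qbar = Matrix.fromBlocks (Qmat G α) 0 0 0)
    (P : Matrix (Fin n ⊕ Fin m) (Fin n ⊕ Fin m) ℝ) (hP : P.PosSemidef)
    (hare : Abarᵀ * P + P * Abar - P * Bbar * Bbarᵀ * P + Qbar = 0)
    (Atil : Matrix (Fin n ⊕ Fin m) (Fin n ⊕ Fin m) ℝ)
    (hAtil : Atil = Abar - Bbar * Bbarᵀ * P)
    (h₁ : Fin n → ℂ) (h₂ : Fin m → ℂ) :
    Atil.map (Complex.ofReal) *ᵥ Sum.elim h₁ h₂ = 0 ↔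
      ((-(G.lapMatrix ℝ) + a • (1 : Matrix (Fin n) (Fin n) ℝ)).map (Complex.ofReal) *ᵥ h₁
          + B.map (Complex.ofReal) *ᵥ h₂ = 0
        ∧ (Qmat G α).map (Complex.ofReal) *ᵥ h₁ = 0) := by
  have hPc : (P.map Complex.ofReal).IsHermitian := hP.1.map _ Complex.semiconj_ofReal_star
  have hQc : (Qbar.map Complex.ofReal).PosSemidef := by
    rw [hQbar]
    exact (posSemidef_Qmat G hα).fromBlocks_zero.map_ofReal
  have hareC : riccati (Abar.map Complex.ofReal) (Bbar.map Complex.ofReal)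
      (Qbar.map Complex.ofReal) (P.map Complex.ofReal) = 0 := by
    have hareR : riccati Abar Bbar Qbar P = 0 := by
      rwa [riccati, conjTranspose_eq_transpose_of_trivial, conjTranspose_eq_transpose_of_trivial]
    have h := riccati_map Complex.ofRealHom Complex.semiconj_ofReal_star Abar Bbar Qbar P
    rw [hareR, Matrix.map_zero _ (map_zero _)] at h
    exact h.symm
  have hAtilC : Atil.map Complex.ofReal = closedLoop (Abar.map Complex.ofReal)
      (Bbar.map Complex.ofReal) (P.map Complex.ofReal) := by
    rw [hAtil, ← conjTranspose_eq_transpose_of_trivial]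
    exact closedLoop_map Complex.ofRealHom Complex.semiconj_ofReal_star Abar Bbar P
  rw [hAtilC, closedLoop_mulVec_eq_zero_iff hPc hQc hareC, hAbar, hQbar]
  simp only [fromBlocks_map, Matrix.map_zero _ Complex.ofReal_zero,
    fromBlocks_zero_zero_mulVec_eq_zero_iff, zero_mulVec, add_zero]

/-- For a symmetric PSD solution `P` of the ARE and `Ã = Ā − B̄B̄ᵀP`: for
`h = [h₁; h₂] ∈ ℂ^{n+m}`, `Ãh = 0` holds iff `(−L + aIₙ)h₁ + Bh₂ = 0` and `Q(α)h₁ = 0`. -/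
theorem closedLoop_kernel_characterization {n m : ℕ} (hn : 0 < n)
    (G : SimpleGraph (Fin n)) [DecidableRel G.Adj]
    (α : Fin n → ℝ) (hα : ∀ i, α i = 1 ∨ α i = -1) (a : ℝ)
    (ι : Fin m → Fin n) (hι : StrictMono ι)
    (B : Matrix (Fin n) (Fin m) ℝ) (hB : B = Matrix.of fun i j => if i = ι j then 1 else 0)
    (Abar : Matrix (Fin n ⊕ Fin m) (Fin n ⊕ Fin m) ℝ)
    (hAbar : Abar = Matrix.fromBlocks
      (-(G.lapMatrix ℝ) + a • (1 : Matrix (Fin n) (Fin n) ℝ)) B 0 0)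
    (Bbar : Matrix (Fin n ⊕ Fin m) (Fin m) ℝ)
    (hBbar : Bbar = Matrix.fromRows (0 : Matrix (Fin n) (Fin m) ℝ) (1 : Matrix (Fin m) (Fin m) ℝ))
    (Qbar : Matrix (Fin n ⊕ Fin m) (Fin n ⊕ Fin m) ℝ)
    (hQbar : Qbar = Matrix.fromBlocks (Qmat G α) 0 0 0)
    (P : Matrix (Fin n ⊕ Fin m) (Fin n ⊕ Fin m) ℝ) (hP : P.PosSemidef)
    (hare : Abarᵀ * P + P * Abar - P * Bbar * Bbarᵀ * P + Qbar = 0)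
    (Atil : Matrix (Fin n ⊕ Fin m) (Fin n ⊕ Fin m) ℝ)
    (hAtil : Atil = Abar - Bbar * Bbarᵀ * P)
    (h₁ : Fin n → ℂ) (h₂ : Fin m → ℂ) :
    Atil.map (Complex.ofReal) *ᵥ Sum.elim h₁ h₂ = 0 ↔
      ((-(G.lapMatrix ℝ) + a • (1 : Matrix (Fin n) (Fin n) ℝ)).map (Complex.ofReal) *ᵥ h₁
          + B.map (Complex.ofReal) *ᵥ h₂ = 0
        ∧ (Qmat G α).map (Complex.ofReal) *ᵥ h₁ = 0) :=
  closedLoop_kernel_characterization_general G α hα a B Abar hAbar Bbar Qbar hQbar P hP hare Atil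
    hAtil h₁ h₂
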